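/- The equivariant Schubert classes form a basis: the classes S̃_λ, λ ranging over binary strings of length n with k ones, form a free module basis of the ring of GKM classes over ℤ[y_1,...,y_n]. Moreover any class α can be written uniquely as a ℤ[y_1,...,y_n]-linear combination of the S̃_λ using only λ such that λ ≥ μ for some μ in the support of α. -/

import Mathlib

def ones (n : ℕ) (l : Fin n → Bool) : ℕ :=
  (Finset.univ.filter (fun i => l i = true)).card

def invCount (n : ℕ) (l : Fin n → Bool) : ℕ :=
  (Finset.univ.filter (fun p : Fin n × Fin n =>
    p.1 < p.2 ∧ l p.1 = true ∧ l p.2 = false)).card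

def psum (n : ℕ) (l : Fin n → Bool) (j : ℕ) : ℕ :=
  (Finset.univ.filter (fun i : Fin n => i.val < j ∧ l i = true)).card

/-- dominance order: `domLE n l l'` means `l ≤ l'`. -/
def domLE (n : ℕ) (l l' : Fin n → Bool) : Prop :=
  ∀ j : ℕ, psum n l j ≤ psum n l' j

/-- the identity string `0^{n-k} 1^k`. -/
def idStr (n k : ℕ) : Fin n → Bool := fun i => decide (n - k ≤ i.val)

/-- the divisor string `0^{n-k-1} 1 0 1^{k-1}`. -/
def dvStr (n k : ℕ) : Fin n → Bool :=
  fun i => decide (i.val = n - k - 1 ∨ n - k + 1 ≤ i.val)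

open MvPolynomial

noncomputable def invProd (n : ℕ) (l : Fin n → Bool) : MvPolynomial (Fin n) ℤ :=
  ∏ p ∈ Finset.univ.filter (fun p : Fin n × Fin n =>
      p.1 < p.2 ∧ l p.1 = true ∧ l p.2 = false), (X p.2 - X p.1)

/-- the GKM condition for a tuple of polynomials indexed by binary strings
(imposed on the strings with `k` ones). -/
def IsGKM (n k : ℕ) (α : (Fin n → Bool) → MvPolynomial (Fin n) ℤ) : Prop :=
  ∀ l : Fin n → Bool, ones n l = k → ∀ i j : Fin n,
    (X i - X j : MvPolynomial (Fin n) ℤ) ∣ (α l - α (l ∘ Equiv.swap i j))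

/-- `α` is supported above `l` in dominance order. -/
def SuppAbove (n k : ℕ) (α : (Fin n → Bool) → MvPolynomial (Fin n) ℤ)
    (l : Fin n → Bool) : Prop :=
  ∀ m : Fin n → Bool, ones n m = k → α m ≠ 0 → domLE n l m

/-- `S` is a family of equivariant Schubert classes. -/
def IsSchubertFamily (n k : ℕ)
    (S : (Fin n → Bool) → (Fin n → Bool) → MvPolynomial (Fin n) ℤ) : Prop :=
  ∀ l : Fin n → Bool, ones n l = k →
    IsGKM n k (S l) ∧ SuppAbove n k (S l) l ∧ S l l = invProd n l ∧
    ∀ m : Fin n → Bool, (S l m).IsHomogeneous (invCount n l)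

instance (n k : ℕ) : DecidablePred (fun l : Fin n → Bool => ones n l = k) :=
  fun _ => Nat.decEq _ _

/-! Dominance order makes the Schubert classes triangular: `S̃_λ` vanishes below `λ` and
`S̃_λ(λ) = invProd λ ≠ 0`. If a GKM class `α` vanishes outside an upper set `U` and `λ` is
minimal in `U`, then `α` vanishes at every `λ ∘ swap i j` with `(i, j)` an inversion of `λ`
(such a swap moves down in dominance order), so the GKM conditions give `y_j - y_i ∣ α(λ)`.
These linear forms are pairwise non-associated primes, hence `invProd λ ∣ α(λ)`, and
subtracting the matching multiple of `S̃_λ` removes `λ` from `U`; induction gives existence.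
Uniqueness and the support bound both follow by evaluating a combination at a minimal string
with nonzero coefficient, where triangularity leaves the single term `c_λ · invProd λ`. -/

section Dominance
open Finset

variable {n k : ℕ}

lemma psum_succ (l : Fin n → Bool) (i : Fin n) :
    psum n l (i + 1) = psum n l i + if l i then 1 else 0 := by
  have split : ∀ m : Fin n, (if m.val < i.val + 1 ∧ l m = true then 1 else 0) =
      (if m.val < i.val ∧ l m = true then 1 else 0) +
        if i = m then (if l i then 1 else 0) else 0 := by
    intro m
    rcases eq_or_ne i m with rfl | h
    · simp
    · have : m.val < i.val + 1 ↔ m.val < i.val := by have := Fin.val_ne_of_ne h; omega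
      simp only [this, h, if_false, add_zero]
  simp only [_root_.psum, card_filter]
  rw [sum_congr rfl fun m _ => split m, sum_add_distrib, sum_ite_eq, if_pos (mem_univ _)]

lemma domLE_antisymm {l l' : Fin n → Bool} (h : domLE n l l') (h' : domLE n l' l) : l = l' := by
  funext i
  have e := psum_succ l i
  rw [le_antisymm (h _) (h' _), le_antisymm (h i) (h' i), psum_succ l' i] at e
  cases hl : l i <;> cases hl' : l' i <;> simp_all

abbrev BinStr (n k : ℕ) := {l : Fin n → Bool // ones n l = k}

-- `domLE n` is the pullback of the pointwise order on `ℕ → ℕ` along `psum n`.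
lemma exists_domLE_minimal (s : Finset (BinStr n k)) (hs : s.Nonempty) :
    ∃ x ∈ s, ∀ y ∈ s, domLE n y x → y = x := by
  obtain ⟨x, hx, hmin⟩ := s.exists_minimalFor (fun l => psum n l.val) hs
  exact ⟨x, hx, fun y hy hyx => Subtype.ext (domLE_antisymm hyx (hmin hy hyx))⟩

lemma ones_comp_perm (l : Fin n → Bool) (e : Equiv.Perm (Fin n)) :
    ones n (l ∘ e) = ones n l := by
  rw [ones, ones, ← card_map e.toEmbedding]
  congr 1
  ext x
  simp

end Dominance

section LinearForms
variable {σ R : Type*} [CommRing R]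

lemma prime_X_sub_X [DecidableEq σ] [IsDomain R] {i j : σ} (h : i ≠ j) :
    Prime (X j - X i : MvPolynomial σ R) := by
  let e := (Equiv.optionSubtypeNe j).symm
  let φ := (renameEquiv R e).trans (optionEquivLeft R {b : σ // b ≠ j})
  rw [← MulEquiv.prime_iff φ.toMulEquiv]
  have hφ : φ.toMulEquiv (X j - X i) = Polynomial.X - Polynomial.C (X ⟨i, h⟩) := by
    simp [φ, e, Equiv.optionSubtypeNe_symm_of_ne h, optionEquivLeft_X_none,
      optionEquivLeft_X_some]
  rw [hφ]
  exact Polynomial.prime_X_sub_C _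

lemma X_sub_X_not_dvd [LinearOrder σ] [Nontrivial R] {i j i' j' : σ} (hij : i < j)
    (hij' : i' < j') (hne : (i, j) ≠ (i', j')) :
    ¬ (X j - X i : MvPolynomial σ R) ∣ X j' - X i' := by
  classical
  obtain ⟨a, ha, hai, haj⟩ : ∃ a, (a = i' ∨ a = j') ∧ a ≠ i ∧ a ≠ j := by
    by_cases hj' : j' = i ∨ j' = j
    · refine ⟨i', Or.inl rfl, ?_⟩
      rcases hj' with rfl | rfl
      · exact ⟨hij'.ne, (hij'.trans hij).ne⟩
      · exact ⟨fun h => hne (by rw [h]), hij'.ne⟩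
    · exact ⟨j', Or.inr rfl, not_or.mp hj'⟩
  intro hdvd
  have := map_dvd (eval fun m => if a = m then (1 : R) else 0) hdvd
  rcases ha with rfl | rfl <;> simp [hai, haj, hij'.ne, hij'.ne'] at this

end LinearForms

section GKM
open Finset

variable {n k : ℕ}

lemma domLE_comp_swap {l : Fin n → Bool} {i j : Fin n} (hij : i < j) (hi : l i = true)
    (hj : l j = false) : domLE n (l ∘ Equiv.swap i j) l := by
  intro J
  refine card_le_card_of_injOn (Equiv.swap i j) (fun p hp => ?_)
    (Equiv.swap i j).injective.injOn
  simp only [coe_filter, mem_univ, true_and, Set.mem_ofPred_eq, Function.comp_apply] at hp ⊢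
  refine ⟨?_, hp.2⟩
  rcases eq_or_ne p i with rfl | hpi
  · simp [hj] at hp
  rcases eq_or_ne p j with rfl | hpj
  · rw [Equiv.swap_apply_right]
    omega
  · rw [Equiv.swap_apply_of_ne_of_ne hpi hpj]
    exact hp.1

lemma invProd_dvd_of_isGKM {α : (Fin n → Bool) → MvPolynomial (Fin n) ℤ} (hα : IsGKM n k α)
    {l : Fin n → Bool} (hl : ones n l = k)
    (hbelow : ∀ m, ones n m = k → domLE n m l → m ≠ l → α m = 0) : invProd n l ∣ α l := by
  refine prod_dvd_of_isRelPrime (fun p hp p' hp' hne => ?_) fun p hp => ?_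
  · simp only [coe_filter, mem_univ, true_and, Set.mem_ofPred_eq] at hp hp'
    exact (prime_X_sub_X hp.1.ne).irreducible.isRelPrime_iff_not_dvd.mpr
      (X_sub_X_not_dvd hp.1 hp'.1 hne)
  · obtain ⟨hlt, hi, hj⟩ := (mem_filter.mp hp).2
    have hswap : α (l ∘ Equiv.swap p.1 p.2) = 0 :=
      hbelow _ ((ones_comp_perm l _).trans hl) (domLE_comp_swap hlt hi hj)
        fun h => by simpa [hi, hj] using congrFun h p.1
    have hgkm := hα l hl p.1 p.2
    rwa [hswap, sub_zero, ← neg_dvd, neg_sub] at hgkm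

lemma invProd_ne_zero (l : Fin n → Bool) : invProd n l ≠ 0 :=
  prod_ne_zero_iff.mpr fun _ hp => (prime_X_sub_X (mem_filter.mp hp).2.1.ne).ne_zero

lemma IsGKM.sub_mul {α β : (Fin n → Bool) → MvPolynomial (Fin n) ℤ} (hα : IsGKM n k α)
    (hβ : IsGKM n k β) (q : MvPolynomial (Fin n) ℤ) : IsGKM n k fun m => α m - q * β m := by
  intro l hl i j
  rw [show α l - q * β l - (α (l ∘ Equiv.swap i j) - q * β (l ∘ Equiv.swap i j)) =
      α l - α (l ∘ Equiv.swap i j) - q * (β l - β (l ∘ Equiv.swap i j)) by ring]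
  exact dvd_sub (hα l hl i j) (dvd_mul_of_dvd_right (hβ l hl i j) q)

end GKM

section Expansion
open Finset

variable {n k : ℕ} {S : (Fin n → Bool) → (Fin n → Bool) → MvPolynomial (Fin n) ℤ}

def IsDomUpperSet (U : Set (BinStr n k)) : Prop :=
  ∀ ⦃a b : BinStr n k⦄, domLE n a b → a ∈ U → b ∈ U

lemma IsDomUpperSet.erase {U : Finset (BinStr n k)} (hU : IsDomUpperSet (U : Set (BinStr n k)))
    {lam : BinStr n k} (hmin : ∀ m ∈ U, domLE n m lam → m = lam) :
    IsDomUpperSet ((U.erase lam : Finset (BinStr n k)) : Set (BinStr n k)) := by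
  intro a b hab ha
  obtain ⟨hne, haU⟩ := mem_erase.mp ha
  refine mem_erase.mpr ⟨?_, hU hab haU⟩
  rintro rfl
  exact hne (hmin a haU hab)

lemma sum_mul_schubert_apply_of_minimal (hS : IsSchubertFamily n k S)
    (c : BinStr n k → MvPolynomial (Fin n) ℤ) (lam₀ : BinStr n k)
    (hmin : ∀ lam, c lam ≠ 0 → domLE n lam lam₀ → lam = lam₀) :
    ∑ lam : BinStr n k, c lam * S lam lam₀ = c lam₀ * invProd n lam₀ := by
  rw [sum_eq_single lam₀ (fun lam _ hne => ?_) (fun h => absurd (mem_univ _) h),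
    (hS lam₀ lam₀.2).2.2.1]
  by_contra h
  obtain ⟨hc, hS0⟩ := mul_ne_zero_iff.mp h
  exact hne (hmin lam hc ((hS lam lam.2).2.1 lam₀ lam₀.2 hS0))

lemma coeff_eq_zero_of_sum_mul_schubert_eq_zero (hS : IsSchubertFamily n k S)
    {U : Set (BinStr n k)} (hU : IsDomUpperSet U) (c : BinStr n k → MvPolynomial (Fin n) ℤ)
    (h : ∀ m ∉ U, ∑ lam : BinStr n k, c lam * S lam m = 0) : ∀ lam ∉ U, c lam = 0 := by
  classical
  by_contra! hbad
  obtain ⟨lam₀, hlam₀, hmin⟩ :=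
    exists_domLE_minimal (univ.filter fun lam => lam ∉ U ∧ c lam ≠ 0)
      (let ⟨lam, hlam⟩ := hbad; ⟨lam, mem_filter.mpr ⟨mem_univ _, hlam⟩⟩)
  obtain ⟨hU₀, hc₀⟩ := (mem_filter.mp hlam₀).2
  have hsum := sum_mul_schubert_apply_of_minimal hS c lam₀ fun lam hc hle =>
    hmin lam (mem_filter.mpr ⟨mem_univ _, fun hlamU => hU₀ (hU hle hlamU), hc⟩) hle
  rw [h lam₀ hU₀, eq_comm] at hsum
  exact mul_ne_zero hc₀ (invProd_ne_zero _) hsum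

lemma exists_sum_mul_schubert_of_eq_zero_outside (hS : IsSchubertFamily n k S)
    (U : Finset (BinStr n k)) (hU : IsDomUpperSet (U : Set (BinStr n k)))
    {α : (Fin n → Bool) → MvPolynomial (Fin n) ℤ} (hα : IsGKM n k α)
    (hαU : ∀ m ∉ U, α m = 0) :
    ∃ c : BinStr n k → MvPolynomial (Fin n) ℤ, ∀ m : BinStr n k,
      α m = ∑ lam : BinStr n k, c lam * S lam m := by
  induction U using Finset.strongInduction generalizing α with
  | H U ih => ?_
  rcases U.eq_empty_or_nonempty with rfl | hne
  · exact ⟨0, fun m => by simp [hαU m (notMem_empty m)]⟩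
  obtain ⟨lam₀, hlam₀, hmin⟩ := exists_domLE_minimal U hne
  obtain ⟨q, hq⟩ := invProd_dvd_of_isGKM hα lam₀.2 fun m hm hle hne =>
    hαU ⟨m, hm⟩ fun hmU => hne (congrArg Subtype.val (hmin ⟨m, hm⟩ hmU hle))
  obtain ⟨hS_gkm, hS_supp, hS_diag, -⟩ := hS lam₀ lam₀.2
  have hβU : ∀ m ∉ U.erase lam₀, α m - q * S lam₀ m = 0 := by
    intro m hm
    rcases eq_or_ne m lam₀ with rfl | hm₀
    · rw [hS_diag, hq, mul_comm, sub_self]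
    have hmU : m ∉ U := fun hmU => hm (mem_erase.mpr ⟨hm₀, hmU⟩)
    have hSm : S lam₀ m = 0 := by
      by_contra hSm
      exact hmU (hU (hS_supp m m.2 hSm) hlam₀)
    rw [hαU m hmU, hSm, mul_zero, sub_zero]
  obtain ⟨c, hc⟩ := ih _ (erase_ssubset hlam₀) (hU.erase hmin) (hα.sub_mul hS_gkm q) hβU
  refine ⟨c + Pi.single lam₀ q, fun m => ?_⟩
  simp only [Pi.add_apply, add_mul, sum_add_distrib, Pi.single_apply, ite_mul, zero_mul,
    sum_ite_eq', mem_univ, if_true, ← hc m, sub_add_cancel]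

lemma exists_sum_mul_schubert (hS : IsSchubertFamily n k S)
    {α : (Fin n → Bool) → MvPolynomial (Fin n) ℤ} (hα : IsGKM n k α) :
    ∃ c : BinStr n k → MvPolynomial (Fin n) ℤ, ∀ m : BinStr n k,
      α m = ∑ lam : BinStr n k, c lam * S lam m :=
  exists_sum_mul_schubert_of_eq_zero_outside hS univ (fun _ _ _ _ => mem_univ _) hα
    fun m hm => absurd (mem_univ m) hm

lemma schubert_coeff_unique (hS : IsSchubertFamily n k S)
    {c c' : BinStr n k → MvPolynomial (Fin n) ℤ}
    (h : ∀ m : BinStr n k,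
      ∑ lam : BinStr n k, c lam * S lam m = ∑ lam : BinStr n k, c' lam * S lam m) :
    c = c' := by
  funext lam
  refine sub_eq_zero.mp (coeff_eq_zero_of_sum_mul_schubert_eq_zero hS (U := ∅)
    (fun _ _ _ h => h) (c - c') (fun m _ => ?_) lam (Set.notMem_empty lam))
  simp only [Pi.sub_apply, sub_mul, sum_sub_distrib, h m, sub_self]

lemma exists_support_domLE_of_schubert_coeff_ne_zero (hS : IsSchubertFamily n k S)
    {α : (Fin n → Bool) → MvPolynomial (Fin n) ℤ} {c : BinStr n k → MvPolynomial (Fin n) ℤ}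
    (hc : ∀ m : BinStr n k, α m = ∑ lam : BinStr n k, c lam * S lam m) {lam : BinStr n k}
    (hlam : c lam ≠ 0) : ∃ m : BinStr n k, α m ≠ 0 ∧ domLE n m lam := by
  by_contra! hnone
  refine hlam (coeff_eq_zero_of_sum_mul_schubert_eq_zero hS
    (U := {b | ∃ m : BinStr n k, α m ≠ 0 ∧ domLE n m b}) ?_ c (fun m hm => ?_) lam ?_)
  · rintro a b hab ⟨m, hm, hma⟩
    exact ⟨m, hm, fun j => (hma j).trans (hab j)⟩
  · rw [← hc m]
    by_contra hm0
    exact hm ⟨m, hm0, fun _ => le_rfl⟩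
  · rintro ⟨m, hm, hle⟩
    exact hnone m hm hle

end Expansion

theorem stmt9_general (n k : ℕ)
    (S : (Fin n → Bool) → (Fin n → Bool) → MvPolynomial (Fin n) ℤ)
    (hS : IsSchubertFamily n k S) :
    (∀ α, IsGKM n k α →
      ∃! c : {l : Fin n → Bool // ones n l = k} → MvPolynomial (Fin n) ℤ,
        ∀ m, ones n m = k →
          α m = ∑ lam : {l : Fin n → Bool // ones n l = k}, c lam * S lam.val m) ∧
    (∀ α, IsGKM n k α →
      ∀ c : {l : Fin n → Bool // ones n l = k} → MvPolynomial (Fin n) ℤ,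
        (∀ m, ones n m = k →
          α m = ∑ lam : {l : Fin n → Bool // ones n l = k}, c lam * S lam.val m) →
        ∀ lam, c lam ≠ 0 →
          ∃ m : Fin n → Bool, ones n m = k ∧ α m ≠ 0 ∧ domLE n m lam.val) := by
  refine ⟨fun α hα => ?_, fun α _ c hc lam hlam => ?_⟩
  · obtain ⟨c, hc⟩ := exists_sum_mul_schubert hS hα
    exact ⟨c, fun m hm => hc ⟨m, hm⟩,
      fun c' hc' => schubert_coeff_unique hS fun m => (hc' m m.2).symm.trans (hc m)⟩
  · obtain ⟨m, hm, hle⟩ :=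
      exists_support_domLE_of_schubert_coeff_ne_zero hS (fun m => hc m m.2) hlam
    exact ⟨m, m.2, hm, hle⟩

/-- the equivariant Schubert classes form a free-module basis of
the GKM classes over `ℤ[y₁,…,yₙ]`: every GKM class has a unique expansion, and
the expansion of `α` uses only `λ` lying above some element of the support of
`α`. -/
theorem stmt9 (n k : ℕ) (hk : k ≤ n)
    (S : (Fin n → Bool) → (Fin n → Bool) → MvPolynomial (Fin n) ℤ)
    (hS : IsSchubertFamily n k S) :
    (∀ α, IsGKM n k α →
      ∃! c : {l : Fin n → Bool // ones n l = k} → MvPolynomial (Fin n) ℤ,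
        ∀ m, ones n m = k →
          α m = ∑ lam : {l : Fin n → Bool // ones n l = k}, c lam * S lam.val m) ∧
    (∀ α, IsGKM n k α →
      ∀ c : {l : Fin n → Bool // ones n l = k} → MvPolynomial (Fin n) ℤ,
        (∀ m, ones n m = k →
          α m = ∑ lam : {l : Fin n → Bool // ones n l = k}, c lam * S lam.val m) →
        ∀ lam, c lam ≠ 0 →
          ∃ m : Fin n → Bool, ones n m = k ∧ α m ≠ 0 ∧ domLE n m lam.val) :=
  stmt9_general n k S hS
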